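/- For u(z) = log|z₁| on the unit ball B ⊂ ℂ², the volume of the sublevel set is |{u < log R}| = π²(R² − R⁴/2) for 0 < R < 1, and consequently the Lelong number of the Schwarz symmetrization at the origin equals 2: ν_û(0) = lim_{R→0} 4 log R / (log(R² − R⁴/2) + log 2) = 2. -/

import Mathlib

open MeasureTheory Metric Filter Topology
open scoped ENNReal Topology

noncomputable section

abbrev Cn (n : ℕ) := EuclideanSpace ℂ (Fin n)
abbrev Rn (N : ℕ) := EuclideanSpace ℝ (Fin N)

instance (n : ℕ) : MeasurableSpace (Cn n) := MeasurableSpace.comap WithLp.ofLp MeasurableSpace.pi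
instance (n : ℕ) : BorelSpace (Cn n) := PiLp.borelSpace 2
instance (n : ℕ) : MeasureSpace (Cn n) := ⟨(MeasureTheory.Measure.pi fun _ => volume).map (MeasurableEquiv.toLp 2 (Fin n → ℂ))⟩

/-- Circle mean of the truncation `max f (-m)` of an `EReal`-valued function. -/
def circleTruncMean (f : ℂ → EReal) (c : ℂ) (r : ℝ) (m : ℕ) : ℝ :=
  (2 * Real.pi)⁻¹ *
    ∫ θ in (0:ℝ)..(2 * Real.pi),
      (max (f (c + (r : ℂ) * Complex.exp ((θ : ℂ) * Complex.I))) ((-(m : ℝ) : ℝ) : EReal)).toReal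

/-- Circle mean of an `EReal`-valued function, as the decreasing limit of truncated means. -/
def circleMean (f : ℂ → EReal) (c : ℂ) (r : ℝ) : EReal :=
  ⨅ m : ℕ, ((circleTruncMean f c r m : ℝ) : EReal)

/-- Subharmonicity (EReal-valued, sub-mean value property) on a subset of ℂ. -/
def SubharmonicOn' (f : ℂ → EReal) (s : Set ℂ) : Prop :=
  UpperSemicontinuousOn f s ∧
    ∀ c r, 0 < r → closedBall c r ⊆ s → f c ≤ circleMean f c r

/-- Plurisubharmonicity: upper semicontinuity plus the sub-mean value property
along every complex line. -/
def PlurisubharmonicOn {n : ℕ} (u : Cn n → EReal) (s : Set (Cn n)) : Prop :=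
  UpperSemicontinuousOn u s ∧
    ∀ (z w : Cn n) (c : ℂ) (r : ℝ), 0 < r →
      (∀ l : ℂ, dist l c ≤ r → z + l • w ∈ s) →
      u (z + c • w) ≤ circleMean (fun l => u (z + l • w)) c r

/-- `S¹`-invariance of `u` on `s` : `u (e^{iθ} z) = u z`. -/
def S1InvariantOn {n : ℕ} (u : Cn n → EReal) (s : Set (Cn n)) : Prop :=
  ∀ (θ : ℝ), ∀ z ∈ s, u (Complex.exp ((θ : ℂ) * Complex.I) • z) = u z

/-- The Lelong number of `u` at `x`, as `lim_{r→0} (sup_{B_r(x)} u)/log r`. -/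
def lelong {n : ℕ} (u : Cn n → EReal) (x : Cn n) : ℝ :=
  liminf (fun r : ℝ => (⨆ w ∈ ball x r, u w).toReal / Real.log r) (𝓝[>] (0:ℝ))

/-- The exponential of an extended real number, valued in `ℝ≥0∞`. -/
def expE (x : EReal) : ℝ≥0∞ :=
  if x = ⊥ then 0 else if x = ⊤ then ⊤ else ENNReal.ofReal (Real.exp x.toReal)

/-- The complex singularity exponent of `u` over a set `s`:
`sup { c ≥ 0 : e^{-2cu} ∈ L¹(s) }`. -/
def cseOn {n : ℕ} (u : Cn n → EReal) (s : Set (Cn n)) : ℝ :=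
  sSup {c : ℝ | 0 ≤ c ∧ ∫⁻ x in s, expE ((((-2 : ℝ) * c : ℝ) : EReal) * u x) < ⊤}

/-- The complex singularity exponent of `u` at a point `x`:
`sup { c ≥ 0 : e^{-2cu} ∈ L¹(U) for some neighbourhood U of x }`. -/
def csePt {n : ℕ} (u : Cn n → EReal) (x : Cn n) : ℝ :=
  sSup {c : ℝ | 0 ≤ c ∧ ∃ U ∈ 𝓝 x, ∫⁻ y in U, expE ((((-2 : ℝ) * c : ℝ) : EReal) * u y) < ⊤}

/-- The integrability index: the inverse of the complex singularity exponent. -/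
def iota {n : ℕ} (u : Cn n → EReal) (x : Cn n) : ℝ := (csePt u x)⁻¹

/-- The increasing rearrangement `u_*(s) = inf { t : |{u < t}| > s }` (real-valued case). -/
def rearr {N : ℕ} (u : Rn N → ℝ) (Ω : Set (Rn N)) (s : ℝ) : ℝ :=
  sInf {t : ℝ | ENNReal.ofReal s < volume {x ∈ Ω | u x < t}}

/-- The essential supremum of a real-valued function on `Ω`. -/
def essSupR {N : ℕ} (u : Rn N → ℝ) (Ω : Set (Rn N)) : ℝ :=
  sInf {t : ℝ | volume {x ∈ Ω | t < u x} = 0}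

/-- The increasing rearrangement on `[0,|Ω|]`, equal to `ess sup u` at `s = |Ω|`. -/
def rearrFull {N : ℕ} (u : Rn N → ℝ) (Ω : Set (Rn N)) (s : ℝ) : ℝ :=
  if s < (volume Ω).toReal then rearr u Ω s else essSupR u Ω

/-- The increasing rearrangement (EReal-valued case on ℂⁿ). -/
def rearrE {n : ℕ} (u : Cn n → EReal) (Ω : Set (Cn n)) (s : ℝ) : EReal :=
  sInf ((fun t : ℝ => (t : EReal)) ''
    {t : ℝ | ENNReal.ofReal s < volume {x ∈ Ω | u x < (t : EReal)}})

/-- The Schwarz symmetrization `û(x) = u_*(a_N |x|^N)` (real-valued case). -/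
def schwarz {N : ℕ} (u : Rn N → ℝ) (Ω : Set (Rn N)) (x : Rn N) : ℝ :=
  rearr u Ω ((volume (ball (0 : Rn N) ‖x‖)).toReal)

/-- The Schwarz symmetrization `û(x) = u_*(a_{2n} |x|^{2n})` (EReal-valued case on ℂⁿ). -/
def schwarzE {n : ℕ} (u : Cn n → EReal) (Ω : Set (Cn n)) (x : Cn n) : EReal :=
  rearrE u Ω ((volume (ball (0 : Cn n) ‖x‖)).toReal)


/-- The function `u(z) = log|z₁|` on `ℂ²` (with value `−∞` on `{z₁ = 0}`). -/
def u18 : Cn 2 → EReal := fun z =>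
  if z 0 = 0 then (⊥ : EReal) else ((Real.log (‖z 0‖) : ℝ) : EReal)

/-!
Slicing along `z₁`, the sublevel set `{log |z₁| < log R}` of the unit ball fibres over the disc
`|z₁| < R` with fibre the disc of area `π (1 - |z₁|²)`; integrating gives `π² (R² - R⁴ / 2)`.
Since the ball of radius `ρ` in `ℂ²` has volume `π² ρ⁴ / 2`, inverting this distribution
function gives `û(w) = ½ log (1 - √(1 - |w|⁴)) = 2 log |w| - ½ log (1 + √(1 - |w|⁴))`.
As `û` is radial and nondecreasing in `|w|`, its supremum over the ball of radius `r` lies between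
its values at radii `r / 2` and `r`, and both divided by `log r` tend to `2`.
-/

open Real

theorem Cn.measurePreserving_ofLp (n : ℕ) :
    MeasurePreserving (WithLp.ofLp : Cn n → Fin n → ℂ) volume (Measure.pi fun _ => volume) :=
  ((MeasurableEquiv.toLp 2 (Fin n → ℂ)).measurable.measurePreserving _).symm _

theorem Cn.measurePreserving_coords_two :
    MeasurePreserving (fun z : Cn 2 => (z 0, z 1)) := by
  rw [Measure.volume_eq_prod]
  exact (measurePreserving_piFinTwo fun _ => volume).comp (Cn.measurePreserving_ofLp 2)

theorem Cn.norm_sq_two (z : Cn 2) : ‖z‖ ^ 2 = ‖z 0‖ ^ 2 + ‖z 1‖ ^ 2 := by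
  rw [EuclideanSpace.norm_sq_eq, Fin.sum_univ_two]

theorem Complex.volume_setOf_norm_sq_lt (a : ℝ) :
    volume {v : ℂ | ‖v‖ ^ 2 < a} = ENNReal.ofReal (π * a) := by
  rcases le_or_gt a 0 with ha | ha
  · rw [ENNReal.ofReal_of_nonpos (mul_nonpos_of_nonneg_of_nonpos pi_pos.le ha),
      measure_eq_zero_iff_ae_notMem]
    exact .of_forall fun v hv => (hv.trans_le ha).not_ge (sq_nonneg _)
  · have : {v : ℂ | ‖v‖ ^ 2 < a} = ball 0 (√a) := by
      ext v
      rw [mem_ball_zero_iff, lt_sqrt (norm_nonneg v)]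
      rfl
    rw [this, Complex.volume_ball, ← ENNReal.ofReal_pow (sqrt_nonneg a), sq_sqrt ha.le,
      ← ENNReal.ofReal_coe_nnreal, NNReal.coe_real_pi, ← ENNReal.ofReal_mul ha.le, mul_comm]

theorem Complex.integral_ball_fun_norm (f : ℝ → ℝ) {R : ℝ} (hR : 0 ≤ R) :
    ∫ w in ball (0 : ℂ) R, f ‖w‖ = 2 * π * ∫ r in (0 : ℝ)..R, r * f r := by
  have hball : (ball (0 : ℂ) R).indicator (fun w => f ‖w‖)
      = fun w => (Set.Iio R).indicator f ‖w‖ := by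
    ext w
    by_cases hw : ‖w‖ < R
    · simp [hw]
    · simp [hw]
  have hradial : (fun r : ℝ => r ^ (2 - 1) • (Set.Iio R).indicator f r)
      = (Set.Iio R).indicator fun r => r * f r := by
    ext r
    by_cases hr : r < R
    · simp [hr]
    · simp [hr]
  rw [← integral_indicator measurableSet_ball, hball, integral_fun_norm_addHaar volume,
    Complex.finrank_real_complex, measureReal_def, Complex.volume_ball, hradial,
    setIntegral_indicator measurableSet_Iio, Set.Ioi_inter_Iio, ← integral_Ioc_eq_integral_Ioo,
    ← intervalIntegral.integral_of_le hR]
  simp only [ENNReal.ofReal_one, one_pow, one_mul, ENNReal.coe_toReal, NNReal.coe_real_pi,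
    smul_eq_mul, nsmul_eq_mul, Nat.cast_ofNat]
  ring

theorem Cn.volume_setOf_norm_lt_and_norm_apply_zero_lt {ρ R : ℝ} (hR : 0 ≤ R) (hRρ : R ≤ ρ) :
    volume {z : Cn 2 | ‖z‖ < ρ ∧ ‖z 0‖ < R}
      = ENNReal.ofReal (π ^ 2 * (ρ ^ 2 * R ^ 2 - R ^ 4 / 2)) := by
  set T : Set (ℂ × ℂ) := {p | ‖p.1‖ ^ 2 + ‖p.2‖ ^ 2 < ρ ^ 2 ∧ ‖p.1‖ < R}
  have hT : MeasurableSet T :=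
    ((isOpen_lt (f := fun p : ℂ × ℂ => ‖p.1‖ ^ 2 + ‖p.2‖ ^ 2) (by fun_prop) continuous_const).inter
      (isOpen_lt (f := fun p : ℂ × ℂ => ‖p.1‖) (by fun_prop) continuous_const)).measurableSet
  have hpre : {z : Cn 2 | ‖z‖ < ρ ∧ ‖z 0‖ < R} = (fun z : Cn 2 => (z 0, z 1)) ⁻¹' T := by
    ext z
    simp only [Set.mem_ofPred_eq, Set.mem_preimage, T, ← Cn.norm_sq_two,
      sq_lt_sq₀ (norm_nonneg z) (hR.trans hRρ)]
  have hslice (w : ℂ) : volume (Prod.mk w ⁻¹' T)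
      = (ball 0 R).indicator (fun w => ENNReal.ofReal (π * (ρ ^ 2 - ‖w‖ ^ 2))) w := by
    by_cases hw : ‖w‖ < R
    · rw [Set.indicator_of_mem (mem_ball_zero_iff.2 hw), ← Complex.volume_setOf_norm_sq_lt]
      congr 1
      ext v
      simp only [Set.mem_preimage, Set.mem_ofPred_eq, T, hw, and_true]
      constructor <;> intro h <;> linarith
    · rw [Set.indicator_of_notMem (fun h => hw (mem_ball_zero_iff.1 h))]
      simp [T, hw]
  have hnonneg : ∀ w ∈ ball (0 : ℂ) R, 0 ≤ π * (ρ ^ 2 - ‖w‖ ^ 2) := fun w hw =>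
    mul_nonneg pi_pos.le <| sub_nonneg.2 <|
      pow_le_pow_left₀ (norm_nonneg w) ((mem_ball_zero_iff.1 hw).le.trans hRρ) 2
  have hint : IntegrableOn (fun w : ℂ => π * (ρ ^ 2 - ‖w‖ ^ 2)) (ball 0 R) :=
    ((by fun_prop : Continuous fun w : ℂ => π * (ρ ^ 2 - ‖w‖ ^ 2)).continuousOn
      |>.integrableOn_compact (isCompact_closedBall 0 R)).mono_set ball_subset_closedBall
  rw [hpre, Cn.measurePreserving_coords_two.measure_preimage hT.nullMeasurableSet,
    Measure.volume_eq_prod, Measure.prod_apply hT]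
  simp_rw [hslice]
  rw [lintegral_indicator measurableSet_ball,
    ← ofReal_integral_eq_lintegral_ofReal hint
      (ae_restrict_of_forall_mem measurableSet_ball hnonneg),
    Complex.integral_ball_fun_norm (fun r => π * (ρ ^ 2 - r ^ 2)) hR]
  congr 1
  have : ∫ r in (0 : ℝ)..R, r * (π * (ρ ^ 2 - r ^ 2)) = π * (ρ ^ 2 * R ^ 2 / 2 - R ^ 4 / 4) := by
    have hpoly : (fun r : ℝ => r * (π * (ρ ^ 2 - r ^ 2))) = fun r => π * ρ ^ 2 * r - π * r ^ 3 := by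
      ext r; ring
    rw [hpoly, intervalIntegral.integral_sub ((continuous_const_mul _).intervalIntegrable _ _)
        ((by fun_prop : Continuous fun r : ℝ => π * r ^ 3).intervalIntegrable _ _),
      intervalIntegral.integral_const_mul, intervalIntegral.integral_const_mul, integral_id,
      integral_pow]
    ring
  rw [this]
  ring

theorem Cn.volume_ball_two {r : ℝ} (hr : 0 ≤ r) :
    volume (ball (0 : Cn 2) r) = ENNReal.ofReal (π ^ 2 * r ^ 4 / 2) := by
  have : ball (0 : Cn 2) r = {z : Cn 2 | ‖z‖ < r ∧ ‖z 0‖ < r} := by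
    ext z
    simp only [mem_ball_zero_iff, Set.mem_ofPred_eq, iff_self_and]
    exact (PiLp.norm_apply_le z 0).trans_lt
  rw [this, Cn.volume_setOf_norm_lt_and_norm_apply_zero_lt hr le_rfl]
  ring_nf

theorem u18_lt_coe_iff (z : Cn 2) (t : ℝ) : u18 z < t ↔ ‖z 0‖ < exp t := by
  unfold u18
  split_ifs with hz
  · simp [hz, exp_pos]
  · rw [EReal.coe_lt_coe_iff, log_lt_iff_lt_exp (norm_pos_iff.2 hz)]

theorem volume_sublevel_u18 (t : ℝ) :
    volume {z ∈ ball (0 : Cn 2) 1 | u18 z < t}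
      = ENNReal.ofReal (π ^ 2 * (min (exp t) 1 ^ 2 - min (exp t) 1 ^ 4 / 2)) := by
  have : {z ∈ ball (0 : Cn 2) 1 | u18 z < t} = {z : Cn 2 | ‖z‖ < 1 ∧ ‖z 0‖ < min (exp t) 1} := by
    ext z
    simp only [mem_ball_zero_iff, Set.mem_ofPred_eq, u18_lt_coe_iff, lt_min_iff]
    exact ⟨fun h => ⟨h.1, h.2, (PiLp.norm_apply_le z 0).trans_lt h.1⟩, fun h => ⟨h.1, h.2.1⟩⟩
  rw [this, Cn.volume_setOf_norm_lt_and_norm_apply_zero_lt (le_min (exp_pos t).le zero_le_one)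
    (min_le_right _ _)]
  ring_nf

-- `x² - x⁴ / 2 = (1 - (1 - x²)²) / 2`
theorem lt_sq_sub_pow_four_div_two_iff {c x : ℝ} (hx : x ^ 2 ≤ 1) :
    c / 2 < x ^ 2 - x ^ 4 / 2 ↔ 1 - √(1 - c) < x ^ 2 := by
  rw [sub_lt_comm, lt_sqrt (by linarith)]
  constructor <;> intro h <;> nlinarith

def uHatProfile (ρ : ℝ) : ℝ := log (1 - √(1 - ρ ^ 4)) / 2

theorem ofReal_lt_volume_sublevel_u18_iff {ρ : ℝ} (hρ0 : 0 < ρ) (hρ1 : ρ < 1) (t : ℝ) :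
    ENNReal.ofReal (π ^ 2 * ρ ^ 4 / 2) < volume {z ∈ ball (0 : Cn 2) 1 | u18 z < t}
      ↔ uHatProfile ρ < t := by
  have hsqrt : 0 < √(1 - ρ ^ 4) := sqrt_pos.2 (by nlinarith [pow_lt_one₀ hρ0.le hρ1 four_ne_zero])
  have hsqrt1 : √(1 - ρ ^ 4) < 1 := by
    rw [sqrt_lt' one_pos]; nlinarith [pow_pos hρ0 4]
  have hmin : 1 - √(1 - ρ ^ 4) < min (exp t) 1 ^ 2 ↔ 1 - √(1 - ρ ^ 4) < exp t ^ 2 := by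
    rcases le_total (exp t) 1 with h | h
    · rw [min_eq_left h]
    · rw [min_eq_right h, one_pow]
      constructor <;> intro <;> nlinarith
  have hpos : 0 < π ^ 2 * ρ ^ 4 / 2 := by positivity
  rw [volume_sublevel_u18, ENNReal.ofReal_lt_ofReal_iff', and_iff_left_of_imp hpos.trans,
    mul_div_assoc, mul_lt_mul_iff_of_pos_left (by positivity),
    lt_sq_sub_pow_four_div_two_iff (pow_le_one₀ (by positivity) (min_le_right _ _)), hmin,
    sq, ← exp_add, ← two_mul, ← log_lt_iff_lt_exp (by linarith), uHatProfile]
  constructor <;> intro <;> linarith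

theorem EReal.sInf_image_coe_Ioi (a : ℝ) : sInf ((↑) '' Set.Ioi a : Set EReal) = a := by
  refine le_antisymm (le_of_forall_gt_imp_ge_of_dense fun c hc => ?_) ?_
  · obtain ⟨y, hay, hyc⟩ := EReal.exists_between_coe_real hc
    exact (sInf_le (Set.mem_image_of_mem _ (EReal.coe_lt_coe_iff.1 hay))).trans hyc.le
  · exact le_sInf <| Set.forall_mem_image.2 fun t ht => EReal.coe_le_coe_iff.2 (le_of_lt ht)

theorem rearrE_mono {n : ℕ} (u : Cn n → EReal) (Ω : Set (Cn n)) : Monotone (rearrE u Ω) :=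
  fun _ _ hs => sInf_le_sInf <| Set.image_mono fun _ ht =>
    (ENNReal.ofReal_le_ofReal hs).trans_lt ht

theorem rearrE_u18 {ρ : ℝ} (hρ0 : 0 < ρ) (hρ1 : ρ < 1) :
    rearrE u18 (ball 0 1) (π ^ 2 * ρ ^ 4 / 2) = uHatProfile ρ := by
  have : {t : ℝ | ENNReal.ofReal (π ^ 2 * ρ ^ 4 / 2) < volume {z ∈ ball (0 : Cn 2) 1 | u18 z < t}}
      = Set.Ioi (uHatProfile ρ) :=
    Set.ext fun t => ofReal_lt_volume_sublevel_u18_iff hρ0 hρ1 t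
  rw [rearrE, this, EReal.sInf_image_coe_Ioi]

theorem schwarzE_u18_of_norm {w : Cn 2} (hw0 : w ≠ 0) (hw1 : ‖w‖ < 1) :
    schwarzE u18 (ball 0 1) w = uHatProfile ‖w‖ := by
  rw [schwarzE, Cn.volume_ball_two (norm_nonneg w), ENNReal.toReal_ofReal (by positivity),
    rearrE_u18 (norm_pos_iff.2 hw0) hw1]

theorem schwarzE_u18_le {r : ℝ} (hr0 : 0 < r) (hr1 : r < 1) {w : Cn 2} (hw : w ∈ ball 0 r) :
    schwarzE u18 (ball 0 1) w ≤ uHatProfile r := by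
  rw [← rearrE_u18 hr0 hr1, schwarzE]
  refine rearrE_mono _ _ ?_
  rw [← ENNReal.toReal_ofReal (by positivity : 0 ≤ π ^ 2 * r ^ 4 / 2), ← Cn.volume_ball_two hr0.le]
  exact ENNReal.toReal_mono (by rw [Cn.volume_ball_two hr0.le]; exact ENNReal.ofReal_ne_top)
    (measure_mono (ball_subset_ball (mem_ball_zero_iff.1 hw).le))

theorem tendsto_mul_add_div_self_of_tendsto_atBot {α : Type*} {l : Filter α}
    {g h : α → ℝ} {L : ℝ} (a : ℝ) (hg : Tendsto g l atBot) (hh : Tendsto h l (𝓝 L)) :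
    Tendsto (fun x => (a * g x + h x) / g x) l (𝓝 a) := by
  have := tendsto_const_nhds (x := a).add (hh.div_atBot hg)
  rw [add_zero] at this
  refine this.congr' ((hg.eventually_ne_atBot 0).mono fun x hx => ?_)
  dsimp only
  rw [add_div, mul_div_cancel_right₀ _ hx]

theorem uHatProfile_eq {ρ : ℝ} (hρ0 : 0 < ρ) (hρ1 : ρ < 1) :
    uHatProfile ρ = 2 * log ρ - log (1 + √(1 - ρ ^ 4)) / 2 := by
  have hq2 : √(1 - ρ ^ 4) ^ 2 = 1 - ρ ^ 4 :=
    sq_sqrt (by nlinarith [pow_lt_one₀ hρ0.le hρ1 four_ne_zero])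
  have hconj : 1 - √(1 - ρ ^ 4) = ρ ^ 4 / (1 + √(1 - ρ ^ 4)) := by
    rw [eq_div_iff (by positivity)]
    linear_combination -hq2
  rw [uHatProfile, hconj, log_div (by positivity) (by positivity), log_pow]
  push_cast
  ring

theorem tendsto_uHatProfile_mul_div_log {c : ℝ} (hc : 0 < c) :
    Tendsto (fun r => uHatProfile (c * r) / log r) (𝓝[>] 0) (𝓝 2) := by
  have hsqrt : Tendsto (fun r : ℝ => 1 + √(1 - (c * r) ^ 4)) (𝓝[>] 0) (𝓝 2) := by
    have := (by fun_prop : Continuous fun r : ℝ => 1 + √(1 - (c * r) ^ 4)).tendsto 0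
    norm_num at this
    exact this.mono_left nhdsWithin_le_nhds
  have := tendsto_mul_add_div_self_of_tendsto_atBot 2 tendsto_log_nhdsGT_zero
    (tendsto_const_nhds (x := 2 * log c) |>.sub ((hsqrt.log two_ne_zero).div_const 2))
  refine this.congr' ?_
  filter_upwards [Ioo_mem_nhdsGT (inv_pos.2 hc)] with r hr
  rw [uHatProfile_eq (mul_pos hc hr.1) (by rw [← lt_div_iff₀' hc, one_div]; exact hr.2),
    log_mul hc.ne' hr.1.ne']
  ring_nf

theorem toReal_iSup_schwarzE_u18_mem_Icc {r : ℝ} (hr0 : 0 < r) (hr1 : r < 1) :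
    (⨆ w ∈ ball (0 : Cn 2) r, schwarzE u18 (ball 0 1) w).toReal
      ∈ Set.Icc (uHatProfile (2⁻¹ * r)) (uHatProfile r) := by
  have hle : ⨆ w ∈ ball (0 : Cn 2) r, schwarzE u18 (ball 0 1) w ≤ uHatProfile r :=
    iSup₂_le fun w hw => schwarzE_u18_le hr0 hr1 hw
  obtain ⟨w, hw⟩ := exists_norm_eq (Cn 2) (by positivity : 0 ≤ 2⁻¹ * r)
  have hge :
      (uHatProfile (2⁻¹ * r) : EReal) ≤ ⨆ w ∈ ball (0 : Cn 2) r, schwarzE u18 (ball 0 1) w := by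
    refine le_iSup₂_of_le w (mem_ball_zero_iff.2 (by rw [hw]; linarith)) (le_of_eq ?_)
    rw [schwarzE_u18_of_norm (norm_pos_iff.1 (by rw [hw]; positivity)) (by rw [hw]; linarith), hw]
  exact ⟨EReal.toReal_le_toReal hge (EReal.coe_ne_bot _)
      (ne_top_of_le_ne_top (EReal.coe_ne_top _) hle),
    EReal.toReal_le_toReal hle (ne_bot_of_le_ne_bot (EReal.coe_ne_bot _) hge)
      (EReal.coe_ne_top _)⟩

theorem lelong_schwarzE_u18 : lelong (schwarzE u18 (ball (0 : Cn 2) 1)) 0 = 2 := by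
  have hbounds : ∀ᶠ r in 𝓝[>] 0,
      uHatProfile r / log r
          ≤ (⨆ w ∈ ball (0 : Cn 2) r, schwarzE u18 (ball 0 1) w).toReal / log r ∧
        (⨆ w ∈ ball (0 : Cn 2) r, schwarzE u18 (ball 0 1) w).toReal / log r
          ≤ uHatProfile (2⁻¹ * r) / log r := by
    filter_upwards [Ioo_mem_nhdsGT one_pos] with r hr
    have hS := toReal_iSup_schwarzE_u18_mem_Icc hr.1 hr.2
    have hlog := (log_neg hr.1 hr.2).le
    exact ⟨div_le_div_of_nonpos_of_le hlog hS.2, div_le_div_of_nonpos_of_le hlog hS.1⟩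
  exact Tendsto.liminf_eq <| tendsto_of_tendsto_of_tendsto_of_le_of_le'
    (by simpa using tendsto_uHatProfile_mul_div_log one_pos)
    (tendsto_uHatProfile_mul_div_log (inv_pos.2 two_pos))
    (hbounds.mono fun _ => And.left) (hbounds.mono fun _ => And.right)

theorem tendsto_log_div_log_sq_sub : Tendsto
    (fun R : ℝ => 4 * log R / (log (R ^ 2 - R ^ 4 / 2) + log 2)) (𝓝[>] 0) (𝓝 2) := by
  have hcorr : Tendsto (fun R : ℝ => log (1 - R ^ 2 / 2) + log 2) (𝓝[>] 0) (𝓝 (log 2)) := by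
    have := (by fun_prop : Continuous fun R : ℝ => 1 - R ^ 2 / 2).tendsto 0
    norm_num at this
    simpa using ((this.log one_ne_zero).mono_left nhdsWithin_le_nhds).add_const (log 2)
  have := (tendsto_const_nhds (x := (4 : ℝ))).div
    (tendsto_mul_add_div_self_of_tendsto_atBot 2 tendsto_log_nhdsGT_zero hcorr) two_ne_zero
  norm_num at this
  refine this.congr' ?_
  filter_upwards [Ioo_mem_nhdsGT one_pos] with R hR
  have hfac : R ^ 2 - R ^ 4 / 2 = R ^ 2 * (1 - R ^ 2 / 2) := by ring
  rw [Pi.div_apply, hfac, log_mul (pow_ne_zero 2 hR.1.ne') (by nlinarith [hR.1, hR.2]), log_pow,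
    div_div_eq_mul_div]
  push_cast
  ring_nf

/-- for `u(z) = log|z₁|` on the unit ball of `ℂ²`, the sublevel sets have
volume `π²(R² − R⁴/2)`, the displayed limit equals `2`, and consequently the Lelong number
of the Schwarz symmetrization at the origin equals `2`. -/
theorem stmt18 :
    (∀ R : ℝ, 0 < R → R < 1 →
      volume {z ∈ ball (0 : Cn 2) 1 | u18 z < ((Real.log R : ℝ) : EReal)}
        = ENNReal.ofReal (Real.pi ^ 2 * (R ^ 2 - R ^ 4 / 2))) ∧
    Tendsto (fun R : ℝ => 4 * Real.log R / (Real.log (R ^ 2 - R ^ 4 / 2) + Real.log 2))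
      (𝓝[>] (0 : ℝ)) (𝓝 2) ∧
    lelong (schwarzE u18 (ball (0 : Cn 2) 1)) 0 = 2 := by
  refine ⟨fun R hR0 hR1 => ?_, tendsto_log_div_log_sq_sub, lelong_schwarzE_u18⟩
  rw [volume_sublevel_u18, exp_log hR0, min_eq_left hR1.le]

end
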